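/- For every ε > 0, every integer j ≥ 0 and every n ≥ 0 one has the strict chain of inequalities 0 ≤ b_n^{(2j-1)} < b_n^{(2j+1)} < b_n^{(2j+2)} < b_n^{(2j)}. -/
import Mathlib


/-- The map `T` acting on sequences: `T(u)₀ = ε/(1+u₁)`,
`T(u)ₙ = ε(n+1)/(1 + u_{n-1} + u_{n+1})` for `n ≥ 1`. -/
noncomputable def Tmap (ε : ℝ) (u : ℕ → ℝ) : ℕ → ℝ
  | 0 => ε / (1 + u 1)
  | (n+1) => ε * ((n : ℝ) + 2) / (1 + u n + u (n+2))

/-- Shifted bound sequences: `bnd ε k = b^{(k-1)}`, i.e. `bnd ε 0 = b^{(-1)} = 0`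
and `bnd ε (k+1) = T (bnd ε k)`, so that `b^{(k)} = bnd ε (k+1)` for `k ≥ -1`. -/
noncomputable def bnd (ε : ℝ) : ℕ → ℕ → ℝ
  | 0 => fun _ => 0
  | (k+1) => Tmap ε (bnd ε k)

/-- Shifted rescaled bounds: `rho ε k n = ρ_n^{(k-1)} = b_n^{(k-1)}/(ε(n+1))`. -/
noncomputable def rho (ε : ℝ) (k n : ℕ) : ℝ := bnd ε k n / (ε * ((n : ℝ) + 1))

/-- The differences `Δd ε k n = Δ_n^{(k)} = (-1)^k (ρ_n^{(k)} - ρ_n^{(k-1)})` for `k ≥ 0`. -/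
noncomputable def Δd (ε : ℝ) (k n : ℕ) : ℝ := (-1 : ℝ)^k * (rho ε (k+1) n - rho ε k n)


lemma Tmap_pos (ε : ℝ) (hε : 0 < ε) (u : ℕ → ℝ) (hu : ∀ n, 0 ≤ u n) :
    ∀ n, 0 < Tmap ε u n := by
  intro n
  cases n with
  | zero =>
    simp only [Tmap]
    exact div_pos hε (by linarith [hu 1])
  | succ n =>
    simp only [Tmap]
    apply div_pos
    · have : (0:ℝ) ≤ (n:ℝ) := Nat.cast_nonneg n
      positivity
    · linarith [hu n, hu (n+2)]

lemma Tmap_strict_anti (ε : ℝ) (hε : 0 < ε) (u v : ℕ → ℝ) (hu : ∀ n, 0 ≤ u n)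
    (huv : ∀ n, u n < v n) : ∀ n, Tmap ε v n < Tmap ε u n := by
  intro n
  cases n with
  | zero =>
    simp only [Tmap]
    exact div_lt_div_of_pos_left hε (by linarith [hu 1]) (by linarith [huv 1])
  | succ n =>
    simp only [Tmap]
    apply div_lt_div_of_pos_left
    · have : (0:ℝ) ≤ (n:ℝ) := Nat.cast_nonneg n
      positivity
    · linarith [hu n, hu (n+2)]
    · linarith [huv n, huv (n+2)]

lemma bnd_succ (ε : ℝ) (k : ℕ) : bnd ε (k+1) = Tmap ε (bnd ε k) := rfl

lemma bnd_nonneg (ε : ℝ) (hε : 0 < ε) : ∀ k n, 0 ≤ bnd ε k n := by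
  intro k
  induction k with
  | zero => intro n; simp [bnd]
  | succ k ih =>
    intro n
    exact le_of_lt (Tmap_pos ε hε (bnd ε k) ih n)

lemma bnd_pos (ε : ℝ) (hε : 0 < ε) (k n : ℕ) : 0 < bnd ε (k+1) n :=
  Tmap_pos ε hε (bnd ε k) (bnd_nonneg ε hε k) n

lemma chain (ε : ℝ) (hε : 0 < ε) : ∀ j n,
    bnd ε (2*j) n < bnd ε (2*j+2) n ∧ bnd ε (2*j+2) n < bnd ε (2*j+3) n ∧
    bnd ε (2*j+3) n < bnd ε (2*j+1) n := by
  intro j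
  induction j with
  | zero =>
    intro n
    have h02 : ∀ m, bnd ε 0 m < bnd ε 2 m := fun m => by
      simpa [bnd] using bnd_pos ε hε 1 m
    have h01 : ∀ m, bnd ε 0 m < bnd ε 1 m := fun m => by
      simpa [bnd] using bnd_pos ε hε 0 m
    have h21 : ∀ m, bnd ε 2 m < bnd ε 1 m :=
      Tmap_strict_anti ε hε (bnd ε 0) (bnd ε 1) (bnd_nonneg ε hε 0) h01
    have h23 : ∀ m, bnd ε 2 m < bnd ε 3 m :=
      Tmap_strict_anti ε hε (bnd ε 2) (bnd ε 1) (bnd_nonneg ε hε 2) h21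
    have h31 : ∀ m, bnd ε 3 m < bnd ε 1 m :=
      Tmap_strict_anti ε hε (bnd ε 0) (bnd ε 2) (bnd_nonneg ε hε 0) h02
    exact ⟨h02 n, h23 n, h31 n⟩
  | succ j ih =>
    intro n
    set a := 2*j with ha
    have e1 : 2*(j+1) = a+2 := by omega
    have e2 : 2*(j+1)+2 = a+4 := by omega
    have e3 : 2*(j+1)+3 = a+5 := by omega
    have e4 : 2*(j+1)+1 = a+3 := by omega
    rw [e1]
    have h24 : ∀ m, bnd ε (a+2) m < bnd ε (a+4) m :=
      Tmap_strict_anti ε hε (bnd ε (a+3)) (bnd ε (a+1)) (bnd_nonneg ε hε (a+3))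
        (fun m => (ih m).2.2)
    have h43 : ∀ m, bnd ε (a+4) m < bnd ε (a+3) m :=
      Tmap_strict_anti ε hε (bnd ε (a+2)) (bnd ε (a+3)) (bnd_nonneg ε hε (a+2))
        (fun m => (ih m).2.1)
    have h45 : ∀ m, bnd ε (a+4) m < bnd ε (a+5) m :=
      Tmap_strict_anti ε hε (bnd ε (a+4)) (bnd ε (a+3)) (bnd_nonneg ε hε (a+4)) h43
    have h53 : ∀ m, bnd ε (a+5) m < bnd ε (a+3) m :=
      Tmap_strict_anti ε hε (bnd ε (a+2)) (bnd ε (a+4)) (bnd_nonneg ε hε (a+2)) h24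
    exact ⟨h24 n, h45 n, h53 n⟩

/-- The strict chain `0 ≤ b_n^{(2j-1)} < b_n^{(2j+1)} < b_n^{(2j+2)} < b_n^{(2j)}`. -/
theorem statement2 (ε : ℝ) (hε : 0 < ε) (j n : ℕ) :
    0 ≤ bnd ε (2*j) n ∧ bnd ε (2*j) n < bnd ε (2*j+2) n ∧
    bnd ε (2*j+2) n < bnd ε (2*j+3) n ∧ bnd ε (2*j+3) n < bnd ε (2*j+1) n := by
  exact ⟨bnd_nonneg ε hε (2*j) n, chain ε hε j n⟩
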